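/- In a dependence space, if X is independent, B ⊆ X, and X is maximal among independent sets Y satisfying B ⊆ Y ⊆ A ∪ B, then every element a ∈ A depends on X. -/

import Mathlib

variable {α : Type*}

/-- A set is dependent if it contains a directly dependent (finite) set. -/
def Dep (Δ : Set (Finset α)) (A : Set α) : Prop :=
  ∃ D ∈ Δ, (D : Set α) ⊆ A

/-- A set is independent if it is not dependent. -/
def Indep (Δ : Set (Finset α)) (A : Set α) : Prop := ¬ Dep Δ A

/-- `x` depends on `A`: `x ∈ A`, or there are distinct `x₀ = x, x₁, …, xₙ` with
`x₁, …, xₙ ∈ A` and `{x₀, …, xₙ} ∈ Δ` (encoded via a finset `D`). -/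
def DepSpaceDependsOn (Δ : Set (Finset α)) (x : α) (A : Set α) : Prop :=
  x ∈ A ∨ ∃ D ∈ Δ, x ∈ D ∧ ((D : Set α) \ {x}) ⊆ A

/-- Transitivity axiom of a dependence space. -/
def TransAxiom (Δ : Set (Finset α)) : Prop :=
  ∀ (x : α) (A B : Set α), DepSpaceDependsOn Δ x A → (∀ a ∈ A, DepSpaceDependsOn Δ a B) →
    DepSpaceDependsOn Δ x B

/-- A basis: an independent set on which every element depends. -/
def IsBasis (Δ : Set (Finset α)) (A : Set α) : Prop :=
  Indep Δ A ∧ ∀ x : α, DepSpaceDependsOn Δ x A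

theorem maximal_between_dependsOn (Δ : Set (Finset α))
    (hcard : ∀ D ∈ Δ, 2 ≤ D.card) (htrans : TransAxiom Δ)
    (A B X : Set α) (hX : Indep Δ X) (hBX : B ⊆ X) (hXAB : X ⊆ A ∪ B)
    (hmax : ∀ Y : Set α, Indep Δ Y → B ⊆ Y → Y ⊆ A ∪ B → X ⊆ Y → X = Y) :
    ∀ a ∈ A, DepSpaceDependsOn Δ a X := by
  intro a ha
  by_cases haX : a ∈ X
  · exact Or.inl haX
  · have hne : X ≠ X ∪ {a} := by
      intro h; exact haX (h ▸ Set.mem_union_right X rfl)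
    have hdep : Dep Δ (X ∪ {a}) := by
      by_contra hind
      exact hne (hmax _ hind (fun b hb => Or.inl (hBX hb))
        (Set.union_subset hXAB (by simp [ha])) Set.subset_union_left)
    obtain ⟨D, hD, hDsub⟩ := hdep
    have haD : a ∈ D := by
      by_contra haD
      exact hX ⟨D, hD, fun x hx => (hDsub hx).resolve_right (by
        rintro rfl; exact haD hx)⟩
    refine Or.inr ⟨D, hD, haD, fun x hx => ?_⟩
    exact (hDsub hx.1).resolve_right hx.2
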